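/- Let K be a field of characteristic zero and let A be the quotient of the free (noncommutative) K-algebra K⟨b,c⟩ by the two-sided ideal generated by b², c², and (b+c)². Then A is a K-vector space of dimension 4, with basis {1, b, c, bc}. -/

import Mathlib

/-!
Since `(x b + y c)² = x² b² + x y (b c + c b) + y² c²`, the three relations say that every element of
`K b + K c` squares to zero, so the algebra is the exterior algebra of `K²`, of dimension `2² = 4`.
The relations `b² = c² = 0` and `c b = -b c` let every word in `b, c` be rewritten as a multiple of
one of `1, b, c, b c`, so these four elements span, and hence form a basis.
-/

noncomputable section
open FreeAlgebra

/-- The relations `b² = 0`, `c² = 0`, `(b+c)² = 0` on the free algebra `K⟨b,c⟩`. -/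
inductive ConRel (K : Type*) [Field K] :
    FreeAlgebra K (Fin 2) → FreeAlgebra K (Fin 2) → Prop
  | rb : ConRel K ((ι K (0 : Fin 2))^2) 0
  | rc : ConRel K ((ι K (1 : Fin 2))^2) 0
  | rbc : ConRel K ((ι K (0 : Fin 2) + ι K (1 : Fin 2))^2) 0

theorem ExteriorAlgebra.finrank_eq_two_pow (R M : Type*) [CommRing R] [StrongRankCondition R]
    [AddCommGroup M] [Module R M] [Module.Free R M] [Module.Finite R M] :
    Module.finrank R (ExteriorAlgebra R M) = 2 ^ Module.finrank R M := by
  rw [Module.finrank_eq_card_basis (Module.finBasis R M).ExteriorAlgebra, Fintype.card_finset,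
    Fintype.card_fin]

theorem Submodule.mul_mem_span_of_mul_mem {R A : Type*} [CommSemiring R] [Semiring A]
    [Algebra R A] {s : Set A} {a x : A} (h : ∀ y ∈ s, a * y ∈ span R s) (hx : x ∈ span R s) :
    a * x ∈ span R s :=
  (span_le (p := (span R s).comap (LinearMap.mulLeft R a))).mpr h hx

theorem FreeAlgebra.eq_top_of_one_mem_of_ι_mul_mem {R X A : Type*} [CommSemiring R] [Semiring A]
    [Algebra R A] {f : FreeAlgebra R X →ₐ[R] A} (hf : Function.Surjective f) {S : Submodule R A}
    (h1 : 1 ∈ S) (hι : ∀ x, ∀ s ∈ S, f (ι R x) * s ∈ S) : S = ⊤ := by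
  have hmul : ∀ a, ∀ s ∈ S, f a * s ∈ S := by
    intro a
    induction a with
    | grade0 r =>
      intro s hs
      rw [AlgHom.commutes, ← Algebra.smul_def]
      exact S.smul_mem r hs
    | grade1 x => exact hι x
    | mul a b iha ihb =>
      intro s hs
      rw [map_mul, mul_assoc]
      exact iha _ (ihb s hs)
    | add a b iha ihb =>
      intro s hs
      rw [map_add, add_mul]
      exact S.add_mem (iha s hs) (ihb s hs)
  refine eq_top_iff.mpr fun x _ ↦ ?_
  obtain ⟨a, rfl⟩ := hf x
  simpa using hmul a 1 h1

namespace ConRel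

variable (K : Type*) [Field K]

local notation "A" => RingQuot (ConRel K)
local notation "β" => RingQuot.mkAlgHom K (ConRel K) (ι K 0)
local notation "γ" => RingQuot.mkAlgHom K (ConRel K) (ι K 1)

theorem b_mul_b : β * β = 0 := by
  simpa [sq] using RingQuot.mkAlgHom_rel K (ConRel.rb (K := K))

theorem c_mul_c : γ * γ = 0 := by
  simpa [sq] using RingQuot.mkAlgHom_rel K (ConRel.rc (K := K))

theorem c_mul_b_add_b_mul_c : γ * β + β * γ = 0 := by
  have h := RingQuot.mkAlgHom_rel K (ConRel.rbc (K := K))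
  rwa [map_pow, map_zero, map_add, sq, mul_add, add_mul, add_mul, b_mul_b, c_mul_c,
    zero_add, add_zero] at h

theorem c_mul_b : γ * β = -(β * γ) :=
  eq_neg_of_add_eq_zero_left (c_mul_b_add_b_mul_c K)

theorem b_mul_b_mul_c : β * (β * γ) = 0 := by
  rw [← mul_assoc, b_mul_b, zero_mul]

theorem c_mul_b_mul_c : γ * (β * γ) = 0 := by
  simpa [add_mul, mul_assoc, c_mul_c] using congrArg (· * γ) (c_mul_b_add_b_mul_c K)

theorem linearCombination_mul_self (x : Fin 2 → K) :
    Fintype.linearCombination K ![β, γ] x * Fintype.linearCombination K ![β, γ] x = 0 := by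
  simp only [Fintype.linearCombination_apply, Fin.sum_univ_two, Matrix.cons_val_zero,
    Matrix.cons_val_one, add_mul, mul_add, smul_mul_smul, b_mul_b, c_mul_c, smul_zero,
    zero_add, add_zero, mul_comm (x 1), ← smul_add, c_mul_b_add_b_mul_c]

def toExteriorAlgebra : A →ₐ[K] ExteriorAlgebra K (Fin 2 → K) :=
  RingQuot.liftAlgHom K ⟨FreeAlgebra.lift K fun i ↦ ExteriorAlgebra.ι K (Pi.single i 1), by
    rintro _ _ ⟨⟩ <;> simp only [sq, map_mul, map_add, lift_ι_apply, map_zero]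
    · exact ExteriorAlgebra.ι_sq_zero _
    · exact ExteriorAlgebra.ι_sq_zero _
    · rw [← map_add, ExteriorAlgebra.ι_sq_zero]⟩

def ofExteriorAlgebra : ExteriorAlgebra K (Fin 2 → K) →ₐ[K] A :=
  ExteriorAlgebra.lift K ⟨Fintype.linearCombination K ![β, γ], linearCombination_mul_self K⟩

def equivExteriorAlgebra : A ≃ₐ[K] ExteriorAlgebra K (Fin 2 → K) :=
  AlgEquiv.ofAlgHom (toExteriorAlgebra K) (ofExteriorAlgebra K)
    (by
      ext : 1
      apply LinearMap.pi_ext'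
      intro i
      ext
      fin_cases i <;> simp [toExteriorAlgebra, ofExteriorAlgebra])
    (by
      ext i
      fin_cases i <;> simp [toExteriorAlgebra, ofExteriorAlgebra])

theorem finrank_eq_four : Module.finrank K A = 4 := by
  rw [(equivExteriorAlgebra K).toLinearEquiv.finrank_eq, ExteriorAlgebra.finrank_eq_two_pow,
    Module.finrank_fin_fun]
  rfl

def monomials : Fin 4 → A := ![1, β, γ, β * γ]

theorem span_monomials : Submodule.span K (Set.range (monomials K)) = ⊤ := by
  refine eq_top_of_one_mem_of_ι_mul_mem (RingQuot.mkAlgHom_surjective K (ConRel K))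
    (Submodule.subset_span ⟨0, rfl⟩)
    fun x _ hs ↦ Submodule.mul_mem_span_of_mul_mem ?_ hs
  rintro _ ⟨i, rfl⟩
  fin_cases x <;> fin_cases i <;>
    simp [monomials, b_mul_b, c_mul_c, c_mul_b, b_mul_b_mul_c, c_mul_b_mul_c] <;>
    exact Submodule.subset_span (by simp)

end ConRel

theorem dim_contraction_length_two (K : Type*) [Field K] :
    Module.finrank K (RingQuot (ConRel K)) = 4 ∧
    ∃ B : Module.Basis (Fin 4) K (RingQuot (ConRel K)),
      B 0 = 1 ∧
      B 1 = RingQuot.mkAlgHom K (ConRel K) (ι K 0) ∧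
      B 2 = RingQuot.mkAlgHom K (ConRel K) (ι K 1) ∧
      B 3 = RingQuot.mkAlgHom K (ConRel K) (ι K 0 * ι K 1) := by
  let B := basisOfTopLeSpanOfCardEqFinrank (ConRel.monomials K) (ConRel.span_monomials K).ge
    (by rw [ConRel.finrank_eq_four, Fintype.card_fin])
  refine ⟨ConRel.finrank_eq_four K, B, ?_, ?_, ?_, ?_⟩ <;> simp [B, ConRel.monomials]

end
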